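/- For all n ≥ k ≥ 1, the number of ordered set partitions of [n] into k blocks avoiding the pattern 12 equals C(n-1, k-1), and the same holds for the pattern 21. -/
import Mathlib


open Finset BigOperators

/-- A word `w` of length `n` over the alphabet `[k]` contains the permutation
pattern `p` of length `m`. -/
def WordContains {n k m : ℕ} (w : Fin n → Fin k) (p : Equiv.Perm (Fin m)) : Prop :=
  ∃ ι : Fin m → Fin n, StrictMono ι ∧ ∀ a b : Fin m, w (ι a) < w (ι b) ↔ p a < p b

/-- The number of words of length `n` over the alphabet `[k]` avoiding the pattern `p`. -/
noncomputable def wordAvoidCount (n k m : ℕ) (p : Equiv.Perm (Fin m)) : ℕ :=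
  Nat.card {w : Fin n → Fin k // ¬ WordContains w p}

/-- An ordered set partition of `[n]` into `k` blocks. -/
structure OrdPartition (n k : ℕ) where
  blocks : Fin k → Finset (Fin n)
  blocks_nonempty : ∀ i, (blocks i).Nonempty
  blocks_disjoint : ∀ i j, i ≠ j → Disjoint (blocks i) (blocks j)
  blocks_cover : ∀ x : Fin n, ∃ i, x ∈ blocks i

/-- An ordered set partition contains the permutation pattern `p`. -/
def OPContains {n k m : ℕ} (P : OrdPartition n k) (p : Equiv.Perm (Fin m)) : Prop :=
  ∃ ι : Fin m → Fin k, StrictMono ι ∧ ∃ b : Fin m → Fin n,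
    (∀ j, b j ∈ P.blocks (ι j)) ∧ ∀ a c : Fin m, b a < b c ↔ p a < p c

/-- The number of ordered set partitions of `[n]` into `k` blocks avoiding `p`. -/
noncomputable def opAvoidCount (n k m : ℕ) (p : Equiv.Perm (Fin m)) : ℕ :=
  Nat.card {P : OrdPartition n k // ¬ OPContains P p}

/-- The pattern 321. -/
def p321 : Equiv.Perm (Fin 3) := Fin.revPerm

section Count
variable {m l : ℕ}

variable {m l : ℕ}

def cuts (f : Fin (m+1) → Fin (l+1)) : Finset (Fin m) :=
  Finset.univ.filter fun y => f y.castSucc < f y.succ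

lemma mem_cuts {f : Fin (m+1) → Fin (l+1)} {y : Fin m} :
    y ∈ cuts f ↔ f y.castSucc < f y.succ := by simp [cuts]

lemma f_zero {f : Fin (m+1) → Fin (l+1)} (hm : Monotone f) (hs : Function.Surjective f) :
    f 0 = 0 := by
  obtain ⟨z, hz⟩ := hs 0
  exact le_antisymm (hz ▸ hm (Fin.zero_le z)) (Fin.zero_le _)

lemma f_last {f : Fin (m+1) → Fin (l+1)} (hm : Monotone f) (hs : Function.Surjective f) :
    f (Fin.last m) = Fin.last l := by
  obtain ⟨z, hz⟩ := hs (Fin.last l)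
  exact le_antisymm (Fin.le_last _) (hz ▸ hm (Fin.le_last z))

lemma unit_step {f : Fin (m+1) → Fin (l+1)} (hm : Monotone f) (hs : Function.Surjective f)
    (y : Fin m) : (f y.succ : ℕ) ≤ (f y.castSucc : ℕ) + 1 := by
  by_contra h
  push_neg at h
  have hb : (f y.castSucc : ℕ) + 1 < l + 1 := by have := (f y.succ).isLt; omega
  obtain ⟨z, hz⟩ := hs ⟨(f y.castSucc : ℕ) + 1, hb⟩
  have hzv : (f z : ℕ) = (f y.castSucc : ℕ) + 1 := by rw [hz]
  rcases le_or_gt (z : ℕ) (y : ℕ) with hle | hlt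
  · have : f z ≤ f y.castSucc := hm (by rw [Fin.le_def]; simpa using hle)
    rw [Fin.le_def] at this; omega
  · have : f y.succ ≤ f z := hm (by rw [Fin.le_def]; simpa using hlt)
    rw [Fin.le_def] at this; omega

lemma card_cuts {f : Fin (m+1) → Fin (l+1)} (hm : Monotone f) (hs : Function.Surjective f) :
    (cuts f).card = l := by
  have herase : (Finset.univ.erase (Fin.last l)).card = l := by
    rw [Finset.card_erase_of_mem (Finset.mem_univ _)]
    simp
  have key : (cuts f).card = (Finset.univ.erase (Fin.last l)).card := by
    apply Finset.card_bij (fun y _ => f y.castSucc)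
    · intro y hy
      rw [mem_cuts] at hy
      exact Finset.mem_erase.2 ⟨(lt_of_lt_of_le hy (Fin.le_last _)).ne, Finset.mem_univ _⟩
    · intro a ha b hb hab
      rw [mem_cuts] at ha hb
      by_contra hne
      rcases lt_or_gt_of_ne hne with h | h
      · have : f a.succ ≤ f b.castSucc := hm (by
          rw [Fin.le_def]; have := Fin.lt_def.1 h
          simp only [Fin.val_succ, Fin.coe_castSucc]; omega)
        exact absurd hab (ne_of_lt (lt_of_lt_of_le ha this))
      · have : f b.succ ≤ f a.castSucc := hm (by
          rw [Fin.le_def]; have := Fin.lt_def.1 h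
          simp only [Fin.val_succ, Fin.coe_castSucc]; omega)
        exact absurd hab.symm (ne_of_lt (lt_of_lt_of_le hb this))
    · intro v hv
      have hvne : v ≠ Fin.last l := (Finset.mem_erase.1 hv).1
      have hfib : (Finset.univ.filter fun x => f x = v).Nonempty := by
        obtain ⟨z, hz⟩ := hs v
        exact ⟨z, by simp [hz]⟩
      set x := (Finset.univ.filter fun x => f x = v).max' hfib with hxdef
      have hxmem := (Finset.univ.filter fun x => f x = v).max'_mem hfib
      have hxv : f x = v := (Finset.mem_filter.1 hxmem).2
      have hxne : x ≠ Fin.last m := by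
        intro hxl
        have := f_last hm hs
        rw [hxl, this] at hxv
        exact hvne hxv.symm
      have hxlt : (x : ℕ) < m := by
        have := x.2; rcases Nat.lt_succ_iff_lt_or_eq.1 this with h | h
        · exact h
        · exact absurd (Fin.ext h : x = Fin.last m) hxne
      refine ⟨⟨(x : ℕ), hxlt⟩, ?_, ?_⟩
      · rw [mem_cuts]
        have hcs : (⟨(x : ℕ), hxlt⟩ : Fin m).castSucc = x := by ext; simp
        rw [hcs, hxv]
        have hle : v ≤ f (⟨(x : ℕ), hxlt⟩ : Fin m).succ := by
          rw [← hxv]; exact hm (by rw [Fin.le_def]; simp)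
        rcases eq_or_lt_of_le hle with heq | hlt
        · exfalso
          have hmem : (⟨(x : ℕ), hxlt⟩ : Fin m).succ ∈ Finset.univ.filter fun x => f x = v := by
            simp only [Finset.mem_filter, Finset.mem_univ, true_and]
            exact heq.symm
          have := Finset.le_max' _ _ hmem
          rw [← hxdef] at this
          rw [Fin.le_def] at this
          simp only [Fin.val_succ] at this; omega
        · exact hlt
      · have hcs : (⟨(x : ℕ), hxlt⟩ : Fin m).castSucc = x := by ext; simp
        rw [hcs, hxv]

  rw [key, herase]

lemma filter_lt_succ (s : Finset (Fin m)) (j : ℕ) (hj : j < m) :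
    (s.filter fun y : Fin m => (y : ℕ) < j + 1).card
      = (s.filter fun y : Fin m => (y : ℕ) < j).card + (if (⟨j, hj⟩ : Fin m) ∈ s then 1 else 0) := by
  have hiff : ∀ y : Fin m, ((y : ℕ) < j + 1) ↔ ((y : ℕ) < j ∨ y = ⟨j, hj⟩) := by
    intro y
    constructor
    · intro h
      rcases Nat.lt_or_ge (y : ℕ) j with h' | h'
      · exact Or.inl h'
      · exact Or.inr (Fin.ext (show (y : ℕ) = j by omega))
    · rintro (h | rfl)
      · omega
      · simp
  rw [Finset.filter_congr (fun y _ => by rw [hiff y]), Finset.filter_or,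
    Finset.card_union_of_disjoint, Finset.filter_eq']
  · split <;> simp
  · simp only [Finset.disjoint_left, Finset.mem_filter]
    rintro a ⟨-, ha⟩ ⟨-, rfl⟩
    simp at ha
lemma count_cuts {f : Fin (m+1) → Fin (l+1)} (hm : Monotone f) (hs : Function.Surjective f) :
    ∀ j : ℕ, (hj : j < m + 1) →
      ((cuts f).filter fun y : Fin m => (y : ℕ) < j).card = (f ⟨j, hj⟩ : ℕ) := by
  intro j
  induction j with
  | zero =>
    intro hj
    have h0 : (⟨0, hj⟩ : Fin (m+1)) = 0 := rfl
    rw [h0, f_zero hm hs]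
    simp
  | succ j ih =>
    intro hj
    have hjm : j < m := by omega
    rw [filter_lt_succ _ j hjm, ih (by omega)]
    have hcs : ((⟨j, hjm⟩ : Fin m).castSucc) = ⟨j, by omega⟩ := rfl
    have hsc : ((⟨j, hjm⟩ : Fin m).succ) = ⟨j + 1, hj⟩ := rfl
    have hstep := unit_step hm hs ⟨j, hjm⟩
    have hmono : (f ⟨j, by omega⟩ : ℕ) ≤ (f ⟨j+1, hj⟩ : ℕ) :=
      Fin.le_def.1 (hm (by rw [Fin.le_def]; simp))
    rw [hcs, hsc] at hstep
    by_cases hc : (⟨j, hjm⟩ : Fin m) ∈ cuts f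
    · have := mem_cuts.1 hc
      rw [hcs, hsc, Fin.lt_def] at this
      simp only [hc, if_pos]
      omega
    · have : ¬ f ((⟨j, hjm⟩ : Fin m).castSucc) < f ((⟨j, hjm⟩ : Fin m).succ) := fun h => hc (mem_cuts.2 h)
      rw [hcs, hsc, Fin.lt_def, not_lt] at this
      simp only [hc, if_neg, not_false_iff]
      omega

lemma cuts_inj {f g : Fin (m+1) → Fin (l+1)} (hmf : Monotone f) (hsf : Function.Surjective f)
    (hmg : Monotone g) (hsg : Function.Surjective g) (h : cuts f = cuts g) : f = g := by
  funext x
  have h1 := count_cuts hmf hsf x.1 x.2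
  have h2 := count_cuts hmg hsg x.1 x.2
  rw [h] at h1
  apply Fin.ext
  have hx : (⟨x.1, x.2⟩ : Fin (m+1)) = x := rfl
  rw [hx] at h1 h2
  omega

/-- the inverse: step function of a cut set -/
def stepFun (s : Finset (Fin m)) (hs : s.card = l) : Fin (m+1) → Fin (l+1) := fun x =>
  ⟨(s.filter fun y : Fin m => (y : ℕ) < (x : ℕ)).card,
    by have := Finset.card_filter_le s (fun y : Fin m => (y : ℕ) < (x : ℕ)); omega⟩

lemma stepFun_mono (s : Finset (Fin m)) (hs : s.card = l) : Monotone (stepFun s hs) := by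
  intro a b hab
  rw [Fin.le_def]
  exact Finset.card_le_card (Finset.monotone_filter_right s
    (fun y hy => by rw [Fin.le_def] at hab; omega) )

lemma stepFun_last (s : Finset (Fin m)) (hs : s.card = l) :
    stepFun s hs (Fin.last m) = Fin.last l := by
  apply Fin.ext
  show (s.filter fun y : Fin m => (y : ℕ) < m).card = l
  rw [Finset.filter_true_of_mem (fun y _ => y.2), hs]

lemma stepFun_surj (s : Finset (Fin m)) (hs : s.card = l) :
    Function.Surjective (stepFun s hs) := by
  intro v
  set f := stepFun s hs with hf
  have hT : (Finset.univ.filter fun x : Fin (m+1) => (v : ℕ) ≤ (f x : ℕ)).Nonempty := by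
    refine ⟨Fin.last m, ?_⟩
    simp only [Finset.mem_filter, Finset.mem_univ, true_and]
    show (v : ℕ) ≤ (stepFun s hs (Fin.last m) : ℕ)
    rw [stepFun_last s hs]
    have := v.isLt
    simp only [Fin.val_last]
    omega
  set x := (Finset.univ.filter fun x : Fin (m+1) => (v : ℕ) ≤ (f x : ℕ)).min' hT with hxdef
  have hxmem := (Finset.univ.filter fun x : Fin (m+1) => (v : ℕ) ≤ (f x : ℕ)).min'_mem hT
  have hxv : (v : ℕ) ≤ (f x : ℕ) := (Finset.mem_filter.1 hxmem).2
  refine ⟨x, ?_⟩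
  apply Fin.ext
  rcases Nat.eq_zero_or_pos (x : ℕ) with h0 | hpos
  · have hx0 : x = 0 := Fin.ext h0
    have : (f 0 : ℕ) = 0 := by
      show (s.filter fun y : Fin m => (y : ℕ) < ((0 : Fin (m+1)) : ℕ)).card = 0
      simp
    rw [hx0, this] at hxv ⊢
    omega
  · -- x = j+1
    have hxm : (x : ℕ) - 1 < m := by have := x.2; omega
    have hprev : ¬ (v : ℕ) ≤ (f ⟨(x : ℕ) - 1, by omega⟩ : ℕ) := by
      intro hcon
      have hmem : (⟨(x : ℕ) - 1, by omega⟩ : Fin (m+1)) ∈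
          Finset.univ.filter fun x : Fin (m+1) => (v : ℕ) ≤ (f x : ℕ) := by
        simp only [Finset.mem_filter, Finset.mem_univ, true_and]; exact hcon
      have := Finset.min'_le _ _ hmem
      rw [← hxdef, Fin.le_def] at this
      simp at this; omega
    push_neg at hprev
    -- step bound : f x ≤ f (x-1) + 1
    have hstep : (f x : ℕ) ≤ (f ⟨(x : ℕ) - 1, by omega⟩ : ℕ) + 1 := by
      show (s.filter fun y : Fin m => (y : ℕ) < (x : ℕ)).card ≤ _ + 1
      have hfe : (s.filter fun y : Fin m => (y : ℕ) < (x : ℕ))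
          = (s.filter fun y : Fin m => (y : ℕ) < ((x : ℕ) - 1) + 1) :=
        Finset.filter_congr (fun y _ => by constructor <;> intro <;> omega)
      rw [hfe, filter_lt_succ s ((x:ℕ)-1) hxm]
      have hfv : (f (⟨(x : ℕ) - 1, by omega⟩ : Fin (m+1)) : ℕ)
          = (s.filter fun y : Fin m => (y : ℕ) < ((x : ℕ) - 1)).card := rfl
      rw [hfv]
      split <;> omega
    omega

lemma cuts_stepFun (s : Finset (Fin m)) (hs : s.card = l) : cuts (stepFun s hs) = s := by
  ext y
  rw [mem_cuts, Fin.lt_def]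
  show (s.filter fun z : Fin m => (z : ℕ) < (y.castSucc : ℕ)).card
      < (s.filter fun z : Fin m => (z : ℕ) < (y.succ : ℕ)).card ↔ y ∈ s
  have h1 : ((y.castSucc : Fin (m+1)) : ℕ) = (y : ℕ) := rfl
  have h2 : ((y.succ : Fin (m+1)) : ℕ) = (y : ℕ) + 1 := rfl
  rw [h1, h2, filter_lt_succ s (y : ℕ) y.2]
  have hy : (⟨(y : ℕ), y.2⟩ : Fin m) = y := rfl
  rw [hy]
  split <;> rename_i h <;> simp [h]

lemma card_mono_surj :
    Nat.card {f : Fin (m+1) → Fin (l+1) // Function.Surjective f ∧ Monotone f} = m.choose l := by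
  have hbij : Function.Bijective
      (fun f : {f : Fin (m+1) → Fin (l+1) // Function.Surjective f ∧ Monotone f} =>
        (⟨cuts f.1, by
          have := f.2
          exact card_cuts this.2 this.1⟩ : {s : Finset (Fin m) // s.card = l})) := by
    constructor
    · rintro ⟨f, hf⟩ ⟨g, hg⟩ h
      simp only [Subtype.mk.injEq] at h ⊢
      exact cuts_inj hf.2 hf.1 hg.2 hg.1 h
    · rintro ⟨s, hscard⟩
      exact ⟨⟨stepFun s hscard, stepFun_surj s hscard, stepFun_mono s hscard⟩,
        Subtype.ext (cuts_stepFun s hscard)⟩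
  rw [Nat.card_eq_of_bijective _ hbij, Nat.card_eq_fintype_card, Fintype.card_finset_len,
    Fintype.card_fin]

end Count

namespace OrdPartition

variable {n k : ℕ}

noncomputable def idx (P : OrdPartition n k) (x : Fin n) : Fin k := (P.blocks_cover x).choose

lemma idx_mem (P : OrdPartition n k) (x : Fin n) : x ∈ P.blocks (P.idx x) :=
  (P.blocks_cover x).choose_spec

lemma mem_iff_idx (P : OrdPartition n k) {x : Fin n} {i : Fin k} :
    x ∈ P.blocks i ↔ P.idx x = i := by
  constructor
  · intro h
    by_contra hne
    exact (Finset.disjoint_left.1 (P.blocks_disjoint _ _ hne)) (P.idx_mem x) h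
  · rintro rfl; exact P.idx_mem x

lemma idx_surjective (P : OrdPartition n k) : Function.Surjective P.idx := by
  intro i
  obtain ⟨x, hx⟩ := P.blocks_nonempty i
  exact ⟨x, (P.mem_iff_idx).1 hx⟩

lemma ext' {P Q : OrdPartition n k} (h : P.blocks = Q.blocks) : P = Q := by
  cases P; cases Q; cases h; rfl

def ofFun (f : Fin n → Fin k) (hf : Function.Surjective f) : OrdPartition n k where
  blocks i := Finset.univ.filter fun x => f x = i
  blocks_nonempty i := by obtain ⟨x, hx⟩ := hf i; exact ⟨x, by simp [hx]⟩
  blocks_disjoint i j hij := by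
    simp only [Finset.disjoint_left, Finset.mem_filter]
    rintro x ⟨-, rfl⟩ ⟨-, h⟩
    exact hij h
  blocks_cover x := ⟨f x, by simp⟩

@[simp] lemma ofFun_blocks (f : Fin n → Fin k) (hf : Function.Surjective f) (i : Fin k) :
    (ofFun f hf).blocks i = Finset.univ.filter fun x => f x = i := rfl

lemma idx_ofFun (f : Fin n → Fin k) (hf : Function.Surjective f) : (ofFun f hf).idx = f := by
  funext x
  have h := (ofFun f hf).idx_mem x
  rw [ofFun_blocks, Finset.mem_filter] at h
  exact h.2.symm

noncomputable def partEquiv : OrdPartition n k ≃ {f : Fin n → Fin k // Function.Surjective f} where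
  toFun P := ⟨P.idx, P.idx_surjective⟩
  invFun f := ofFun f.1 f.2
  left_inv P := by
    apply ext'
    funext i
    ext x
    simp [P.mem_iff_idx]
  right_inv f := Subtype.ext (idx_ofFun f.1 f.2)

lemma opContains_refl_iff (P : OrdPartition n k) :
    OPContains P (Equiv.refl (Fin 2)) ↔ ∃ x y : Fin n, x < y ∧ P.idx x < P.idx y := by
  constructor
  · rintro ⟨ι, hι, b, hb, hcond⟩
    refine ⟨b 0, b 1, (hcond 0 1).2 (by decide), ?_⟩
    rw [(P.mem_iff_idx).1 (hb 0), (P.mem_iff_idx).1 (hb 1)]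
    exact hι (by decide : (0 : Fin 2) < 1)
  · rintro ⟨x, y, hxy, hidx⟩
    refine ⟨![P.idx x, P.idx y], ?_, ![x, y], ?_, ?_⟩
    · intro a b hab
      fin_cases a <;> fin_cases b <;>
        first
          | exact absurd hab (by decide)
          | simpa using hidx
    · intro j; fin_cases j <;> simp [P.idx_mem]
    · intro a c
      fin_cases a <;> fin_cases c <;>
        simp_all [lt_irrefl, lt_asymm hxy]


lemma opContains_rev_iff (P : OrdPartition n k) :
    OPContains P (Fin.revPerm : Equiv.Perm (Fin 2)) ↔
      ∃ x y : Fin n, x < y ∧ P.idx y < P.idx x := by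
  constructor
  · rintro ⟨ι, hι, b, hb, hcond⟩
    refine ⟨b 1, b 0, (hcond 1 0).2 (by decide), ?_⟩
    rw [(P.mem_iff_idx).1 (hb 0), (P.mem_iff_idx).1 (hb 1)]
    exact hι (by decide : (0 : Fin 2) < 1)
  · rintro ⟨x, y, hxy, hidx⟩
    refine ⟨![P.idx y, P.idx x], ?_, ![y, x], ?_, ?_⟩
    · intro a b hab
      fin_cases a <;> fin_cases b <;>
        first
          | exact absurd hab (by decide)
          | simpa using hidx
    · intro j; fin_cases j <;> simp [P.idx_mem]
    · intro a c
      fin_cases a <;> fin_cases c <;>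
        simp_all [lt_irrefl, lt_asymm hxy] <;> decide

lemma not_contains_rev_iff (P : OrdPartition n k) :
    ¬ OPContains P (Fin.revPerm : Equiv.Perm (Fin 2)) ↔ Monotone P.idx := by
  rw [opContains_rev_iff]
  push_neg
  constructor
  · intro h a b hab
    rcases eq_or_lt_of_le hab with rfl | h'
    · exact le_refl _
    · exact h a b h'
  · intro h x y hxy
    exact h hxy.le

lemma not_contains_refl_iff (P : OrdPartition n k) :
    ¬ OPContains P (Equiv.refl (Fin 2)) ↔ Antitone P.idx := by
  rw [opContains_refl_iff]
  push_neg
  constructor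
  · intro h a b hab
    rcases eq_or_lt_of_le hab with rfl | h'
    · exact le_refl _
    · exact h a b h'
  · intro h x y hxy
    exact h hxy.le

end OrdPartition

def antitoneEquiv {n k : ℕ} :
    {f : Fin n → Fin k // Function.Surjective f ∧ Antitone f} ≃
      {f : Fin n → Fin k // Function.Surjective f ∧ Monotone f} where
  toFun f := ⟨Fin.rev ∘ f.1, Fin.rev_surjective.comp f.2.1, fun a b h => by
    simp only [Function.comp_apply, Fin.rev_le_rev]
    exact f.2.2 h⟩
  invFun f := ⟨Fin.rev ∘ f.1, Fin.rev_surjective.comp f.2.1, fun a b h => by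
    simp only [Function.comp_apply, Fin.rev_le_rev]
    exact f.2.2 h⟩
  left_inv f := Subtype.ext (funext fun x => Fin.rev_rev _)
  right_inv f := Subtype.ext (funext fun x => Fin.rev_rev _)

theorem op_pattern_length_two (n k : ℕ) (hk : 1 ≤ k) (hkn : k ≤ n) :
    opAvoidCount n k 2 (Equiv.refl (Fin 2)) = Nat.choose (n - 1) (k - 1) ∧
    opAvoidCount n k 2 (Fin.revPerm : Equiv.Perm (Fin 2)) = Nat.choose (n - 1) (k - 1) := by
  obtain ⟨l, rfl⟩ : ∃ l, k = l + 1 := ⟨k - 1, by omega⟩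
  obtain ⟨m, rfl⟩ : ∃ m, n = m + 1 := ⟨n - 1, by omega⟩
  simp only [Nat.add_sub_cancel]
  constructor
  · have e : {P : OrdPartition (m+1) (l+1) // ¬ OPContains P (Equiv.refl (Fin 2))} ≃
        {f : Fin (m+1) → Fin (l+1) // Function.Surjective f ∧ Monotone f} := by
      refine Equiv.trans (OrdPartition.partEquiv.subtypeEquiv fun P => ?_)
        (Equiv.trans (Equiv.subtypeSubtypeEquivSubtypeInter _ _) antitoneEquiv)
      exact P.not_contains_refl_iff
    rw [opAvoidCount, Nat.card_congr e, card_mono_surj]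
  · have e : {P : OrdPartition (m+1) (l+1) // ¬ OPContains P (Fin.revPerm : Equiv.Perm (Fin 2))} ≃
        {f : Fin (m+1) → Fin (l+1) // Function.Surjective f ∧ Monotone f} := by
      refine Equiv.trans (OrdPartition.partEquiv.subtypeEquiv fun P => ?_)
        (Equiv.subtypeSubtypeEquivSubtypeInter _ _)
      exact P.not_contains_rev_iff
    rw [opAvoidCount, Nat.card_congr e, card_mono_surj]
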